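/- A revision operator ∗ satisfying RAGM satisfies (C1) (for all nonempty B ⊆ A: min(B, ≤ ∗ A) = min(B, ≤)), (C2) (for all nonempty B with B ∩ A = ∅: min(B, ≤ ∗ A) = min(B, ≤)), (C4) (if min(B, ≤) ∩ A ≠ ∅ then min(B, ≤ ∗ A) ∩ A ≠ ∅), (U) (if min(B, ≤ ∗ A) ∩ A ≠ ∅ then min(B, ≤ ∗ A) ⊆ A) and (D) (if A ⇝ B with respect to ≤ then min(B, ≤ ∗ A) ∩ A = ∅) if and only if it coincides with the restrained revision operator, i.e., ≤ ∗ A = ≤ ∗ᴿ A for every total preorder ≤ and every nonempty A ⊆ V. -/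
import Mathlib


open Set

variable {V : Type*}

/-- A total preorder: reflexive, transitive and total. -/
def IsTP (r : V → V → Prop) : Prop :=
  Reflexive r ∧ Transitive r ∧ ∀ v w, r v w ∨ r w v

/-- The strict part of a relation: v < w iff v ≤ w and not w ≤ v. -/
def SRel (r : V → V → Prop) (v w : V) : Prop := r v w ∧ ¬ r w v

/-- min(A, ≤) = the ≤-minimal elements of A. -/
def mins (r : V → V → Prop) (A : Set V) : Set V :=
  {v | v ∈ A ∧ ∀ w ∈ A, r v w}

/-- A and B counteract with respect to r. -/
def Counter (r : V → V → Prop) (A B : Set V) : Prop :=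
  mins r A ∩ B = ∅ ∧ mins r B ∩ A = ∅

/-- The restrained revision operator. -/
def restrained (r : V → V → Prop) (A : Set V) : V → V → Prop :=
  fun v w => v ∈ mins r A ∨
    (w ∉ mins r A ∧ (SRel r v w ∨ (r v w ∧ (v ∈ A ∨ w ∉ A))))

lemma exists_min_finset {r : V → V → Prop} (h : IsTP r) :
    ∀ s : Finset V, s.Nonempty → ∃ v ∈ s, ∀ w ∈ s, r v w := by
  intro s
  induction s using Finset.cons_induction with
  | empty => intro hs; simp at hs
  | cons a s ha ih =>
    intro _
    rcases s.eq_empty_or_nonempty with h0 | hs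
    · subst h0
      refine ⟨a, by simp, ?_⟩
      intro w hw
      simp only [Finset.cons_empty, Finset.mem_singleton] at hw
      rw [hw]; exact h.1 a
    · obtain ⟨v, hv, hmin⟩ := ih hs
      rcases h.2.2 v a with hva | hav
      · refine ⟨v, Finset.mem_cons_of_mem hv, ?_⟩
        intro w hw
        rcases Finset.mem_cons.1 hw with h1 | h1
        · rw [h1]; exact hva
        · exact hmin w h1
      · refine ⟨a, Finset.mem_cons_self _ _, ?_⟩
        intro w hw
        rcases Finset.mem_cons.1 hw with h1 | h1
        · rw [h1]; exact h.1 a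
        · exact h.2.1 hav (hmin w h1)

lemma mins_nonempty [Fintype V] {r : V → V → Prop} (h : IsTP r) {B : Set V}
    (hB : B.Nonempty) : (mins r B).Nonempty := by
  obtain ⟨v, hv, hmin⟩ := exists_min_finset h (Set.toFinite B).toFinset
    (by simpa using hB)
  refine ⟨v, (Set.Finite.mem_toFinset _).1 hv, fun w hw => hmin w ?_⟩
  exact (Set.Finite.mem_toFinset _).2 hw

lemma tp_pair {s : V → V → Prop} (h : IsTP s) (v w : V) :
    s v w ↔ v ∈ mins s ({v, w} : Set V) := by
  constructor
  · intro hvw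
    refine ⟨Or.inl rfl, ?_⟩
    intro x hx
    rcases hx with h1 | h1
    · rw [h1]; exact h.1 v
    · rw [h1]; exact hvw
  · intro hv
    exact hv.2 w (Or.inr rfl)

section RestrainedProps

variable {r : V → V → Prop} {A : Set V}

lemma res_r {v w : V} (hv : v ∉ mins r A)
    (h : restrained r A v w) : w ∉ mins r A ∧ r v w := by
  rcases h with h | ⟨hw, h | h⟩
  · exact absurd h hv
  · exact ⟨hw, h.1⟩
  · exact ⟨hw, h.1⟩

/-- C1 for restrained -/
lemma res_c1 (hr : IsTP r) {B : Set V} (hBA : B ⊆ A) :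
    mins (restrained r A) B = mins r B := by
  ext v
  constructor
  · rintro ⟨hvB, hmin⟩
    refine ⟨hvB, fun w hw => ?_⟩
    by_cases hvM : v ∈ mins r A
    · exact hvM.2 w (hBA hw)
    · exact (res_r hvM (hmin w hw)).2
  · rintro ⟨hvB, hmin⟩
    refine ⟨hvB, fun w hw => ?_⟩
    by_cases hvM : v ∈ mins r A
    · exact Or.inl hvM
    · have hwM : w ∉ mins r A := by
        intro hwM
        exact hvM ⟨hBA hvB, fun u hu => hr.2.1 (hmin w hw) (hwM.2 u hu)⟩
      exact Or.inr ⟨hwM, Or.inr ⟨hmin w hw, Or.inl (hBA hvB)⟩⟩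

/-- C2 for restrained -/
lemma res_c2 {B : Set V} (hBA : B ∩ A = ∅) :
    mins (restrained r A) B = mins r B := by
  have hnA : ∀ x ∈ B, x ∉ A := by
    intro x hx hxA
    exact Set.eq_empty_iff_forall_notMem.1 hBA x ⟨hx, hxA⟩
  have hnM : ∀ x ∈ B, x ∉ mins r A := fun x hx hxM => hnA x hx hxM.1
  ext v
  constructor
  · rintro ⟨hvB, hmin⟩
    exact ⟨hvB, fun w hw => (res_r (hnM v hvB) (hmin w hw)).2⟩
  · rintro ⟨hvB, hmin⟩
    exact ⟨hvB, fun w hw =>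
      Or.inr ⟨hnM w hw, Or.inr ⟨hmin w hw, Or.inr (hnA w hw)⟩⟩⟩

/-- C4 (strong form) for restrained -/
lemma res_c4 (hr : IsTP r) {B : Set V} {x : V}
    (hx : x ∈ mins r B) (hxA : x ∈ A) : x ∈ mins (restrained r A) B := by
  by_cases hex : ∃ w ∈ B, w ∈ mins r A
  · obtain ⟨w0, hw0B, hw0M⟩ := hex
    have hxM : x ∈ mins r A :=
      ⟨hxA, fun u hu => hr.2.1 (hx.2 w0 hw0B) (hw0M.2 u hu)⟩
    exact ⟨hx.1, fun w _ => Or.inl hxM⟩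
  · push_neg at hex
    exact ⟨hx.1, fun w hw =>
      Or.inr ⟨hex w hw, Or.inr ⟨hx.2 w hw, Or.inl hxA⟩⟩⟩

/-- U for restrained -/
lemma res_u {B : Set V} {x y : V}
    (hx : x ∈ mins (restrained r A) B) (hxA : x ∈ A)
    (hy : y ∈ mins (restrained r A) B) : y ∈ A := by
  by_contra hyA
  have hyM : y ∉ mins r A := fun h => hyA h.1
  have hyx := hy.2 x hx.1
  rcases hyx with h | ⟨hxM, h⟩
  · exact hyM h
  have hsyx : SRel r y x := by
    rcases h with h | ⟨_, h | h⟩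
    · exact h
    · exact absurd h hyA
    · exact absurd hxA h
  have hxy := hx.2 y hy.1
  rcases hxy with h | ⟨_, h | h⟩
  · exact hxM h
  · exact hsyx.2 h.1
  · exact hsyx.2 h.1

/-- D for restrained -/
lemma res_d {B : Set V} (hc : Counter r A B) :
    mins (restrained r A) B ∩ A = ∅ := by
  apply Set.eq_empty_iff_forall_notMem.2
  rintro x ⟨⟨hxB, hmin⟩, hxA⟩
  have hxM : x ∉ mins r A := fun h =>
    Set.eq_empty_iff_forall_notMem.1 hc.1 x ⟨h, hxB⟩
  have hxrB : x ∉ mins r B := fun h =>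
    Set.eq_empty_iff_forall_notMem.1 hc.2 x ⟨h, hxA⟩
  have : ∃ w ∈ B, ¬ r x w := by
    by_contra h
    push_neg at h
    exact hxrB ⟨hxB, h⟩
  obtain ⟨w, hwB, hnxw⟩ := this
  exact hnxw (res_r hxM (hmin w hwB)).2

end RestrainedProps

theorem stmt_15 [Fintype V] [Nonempty V]
    (op : (V → V → Prop) → Set V → (V → V → Prop))
    (htp : ∀ r (A : Set V), IsTP r → A.Nonempty → IsTP (op r A))
    (hragm : ∀ r (A : Set V), IsTP r → A.Nonempty →
      mins (op r A) Set.univ = mins r A) :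
    (((∀ r (A B : Set V), IsTP r → B.Nonempty → B ⊆ A →
        mins (op r A) B = mins r B) ∧
      (∀ r (A B : Set V), IsTP r → A.Nonempty → B.Nonempty → B ∩ A = ∅ →
        mins (op r A) B = mins r B) ∧
      (∀ r (A B : Set V), IsTP r → A.Nonempty → B.Nonempty →
        (mins r B ∩ A).Nonempty → (mins (op r A) B ∩ A).Nonempty) ∧
      (∀ r (A B : Set V), IsTP r → A.Nonempty → B.Nonempty →
        (mins (op r A) B ∩ A).Nonempty → mins (op r A) B ⊆ A) ∧
      (∀ r (A B : Set V), IsTP r → A.Nonempty → B.Nonempty →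
        Counter r A B → mins (op r A) B ∩ A = ∅))
      ↔
     (∀ r (A : Set V), IsTP r → A.Nonempty → op r A = restrained r A)) := by
  constructor
  · rintro ⟨c1, c2, c4, u, d⟩ r A hr hA
    have hs : IsTP (op r A) := htp r A hr hA
    have hM : mins (op r A) Set.univ = mins r A := hragm r A hr hA
    funext v w
    apply propext
    by_cases hvM : v ∈ mins r A
    · constructor
      · intro _; exact Or.inl hvM
      · intro _
        have hv : v ∈ mins (op r A) Set.univ := hM ▸ hvM
        exact hv.2 w (Set.mem_univ w)
    by_cases hwM : w ∈ mins r A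
    · constructor
      · intro hop
        exfalso
        have hw : w ∈ mins (op r A) Set.univ := hM ▸ hwM
        have : v ∈ mins (op r A) Set.univ :=
          ⟨Set.mem_univ v, fun u _ => hs.2.1 hop (hw.2 u (Set.mem_univ u))⟩
        exact hvM (hM ▸ this)
      · rintro (h | ⟨hw, _⟩)
        · exact absurd h hvM
        · exact absurd hwM hw
    -- now v ∉ mins r A, w ∉ mins r A
    have hBne : ({v, w} : Set V).Nonempty := ⟨v, Or.inl rfl⟩
    have hres : restrained r A v w ↔
        (SRel r v w ∨ (r v w ∧ (v ∈ A ∨ w ∉ A))) := by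
      constructor
      · rintro (h | ⟨_, h⟩)
        · exact absurd h hvM
        · exact h
      · intro h; exact Or.inr ⟨hwM, h⟩
    rw [hres]
    by_cases hvA : v ∈ A <;> by_cases hwA : w ∈ A
    · -- both in A : C1
      have hsub : ({v, w} : Set V) ⊆ A := by
        intro x hx
        rcases hx with h1 | h1 <;> (rw [h1]; assumption)
      have heq := c1 r A {v, w} hr hBne hsub
      rw [tp_pair hs, heq, ← tp_pair hr]
      constructor
      · intro h; exact Or.inr ⟨h, Or.inl hvA⟩
      · rintro (h | ⟨h, _⟩) <;> [exact h.1; exact h]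
    · -- v ∈ A, w ∉ A
      by_cases hrvw : r v w
      · -- r v w : use C4 + U
        have hvmin : v ∈ mins r {v, w} := (tp_pair hr v w).1 hrvw
        have h4 := c4 r A {v, w} hr hA hBne ⟨v, hvmin, hvA⟩
        have hu := u r A {v, w} hr hA hBne h4
        obtain ⟨x, hx⟩ := mins_nonempty hs hBne
        have hxv : x = v := by
          rcases hx.1 with h1 | h1
          · exact h1
          · exact absurd (h1 ▸ hu hx) hwA
        constructor
        · intro _; exact Or.inr ⟨hrvw, Or.inl hvA⟩
        · intro _
          have := hx.2 w (Or.inr rfl)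
          rwa [hxv] at this
      · -- ¬ r v w : counteraction, D gives ¬ op v w
        have hcnt : Counter r A ({v, w} : Set V) := by
          constructor
          · apply Set.eq_empty_iff_forall_notMem.2
            rintro x ⟨hx, hxB⟩
            rcases hxB with h1 | h1
            · exact hvM (h1 ▸ hx)
            · exact hwM (h1 ▸ hx)
          · apply Set.eq_empty_iff_forall_notMem.2
            rintro x ⟨hx, hxA⟩
            rcases hx.1 with h1 | h1
            · exact hrvw (h1 ▸ hx.2 w (Or.inr rfl))
            · exact hwA (h1 ▸ hxA)
        have hd := d r A {v, w} hr hA hBne hcnt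
        constructor
        · intro hop
          exfalso
          have hv : v ∈ mins (op r A) {v, w} := (tp_pair hs v w).1 hop
          exact Set.eq_empty_iff_forall_notMem.1 hd v ⟨hv, hvA⟩
        · rintro (h | ⟨h, _⟩)
          · exact absurd h.1 hrvw
          · exact absurd h hrvw
    · -- v ∉ A, w ∈ A
      by_cases hrwv : r w v
      · -- w is r-minimal in pair and in A : C4+U give mins(op) ⊆ A, so ¬ op v w
        have hwmin : w ∈ mins r {v, w} := by
          refine ⟨Or.inr rfl, ?_⟩
          intro x hx
          rcases hx with h1 | h1 <;> rw [h1]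
          · exact hrwv
          · exact hr.1 w
        have h4 := c4 r A {v, w} hr hA hBne ⟨w, hwmin, hwA⟩
        have hu := u r A {v, w} hr hA hBne h4
        constructor
        · intro hop
          exfalso
          exact hvA (hu ((tp_pair hs v w).1 hop))
        · rintro (h | ⟨h, hc⟩)
          · exact absurd hrwv h.2
          · rcases hc with h' | h' <;> [exact absurd h' hvA; exact absurd hwA h']
      · -- ¬ r w v : so SRel r v w; counteraction, D gives w ∉ mins(op), so op v w
        have hrvw : r v w := (hr.2.2 v w).resolve_right hrwv
        have hcnt : Counter r A ({v, w} : Set V) := by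
          constructor
          · apply Set.eq_empty_iff_forall_notMem.2
            rintro x ⟨hx, hxB⟩
            rcases hxB with h1 | h1
            · exact hvM (h1 ▸ hx)
            · exact hwM (h1 ▸ hx)
          · apply Set.eq_empty_iff_forall_notMem.2
            rintro x ⟨hx, hxA⟩
            rcases hx.1 with h1 | h1
            · exact hvA (h1 ▸ hxA)
            · exact hrwv (h1 ▸ hx.2 v (Or.inl rfl))
        have hd := d r A {v, w} hr hA hBne hcnt
        constructor
        · intro _; exact Or.inl ⟨hrvw, hrwv⟩
        · intro _
          obtain ⟨x, hx⟩ := mins_nonempty hs hBne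
          have hxv : x = v := by
            rcases hx.1 with h1 | h1
            · exact h1
            · exact absurd (Set.eq_empty_iff_forall_notMem.1 hd w)
                (not_not_intro ⟨h1 ▸ hx, hwA⟩)
          have := hx.2 w (Or.inr rfl)
          rwa [hxv] at this
    · -- both not in A : C2
      have hdisj : ({v, w} : Set V) ∩ A = ∅ := by
        apply Set.eq_empty_iff_forall_notMem.2
        rintro x ⟨hxB, hxA⟩
        rcases hxB with h1 | h1
        · exact hvA (h1 ▸ hxA)
        · exact hwA (h1 ▸ hxA)
      have heq := c2 r A {v, w} hr hA hBne hdisj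
      rw [tp_pair hs, heq, ← tp_pair hr]
      constructor
      · intro h; exact Or.inr ⟨h, Or.inr hwA⟩
      · rintro (h | ⟨h, _⟩) <;> [exact h.1; exact h]
  · intro hop
    refine ⟨?_, ?_, ?_, ?_, ?_⟩
    · intro r A B hr hB hBA
      have hA : A.Nonempty := hB.mono hBA
      rw [hop r A hr hA]
      exact res_c1 hr hBA
    · intro r A B hr hA hB hBA
      rw [hop r A hr hA]
      exact res_c2 hBA
    · intro r A B hr hA hB hne
      rw [hop r A hr hA]
      obtain ⟨x, hx, hxA⟩ := hne
      exact ⟨x, res_c4 hr hx hxA, hxA⟩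
    · intro r A B hr hA hB hne
      rw [hop r A hr hA] at hne ⊢
      obtain ⟨x, hx, hxA⟩ := hne
      exact fun y hy => res_u hx hxA hy
    · intro r A B hr hA hB hc
      rw [hop r A hr hA]
      exact res_d hc
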